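/- arXiv:1203.3391 — 6 statements merged into one kernel-verified Lean document; each statement's English description precedes it below -/
import Mathlib

section
/- Let s ∈ ℝ³ with ‖s‖ < 1, let V and H be 3×3 real symmetric positive definite matrices. Set B = √(V H⁻¹ V) (the positive semidefinite matrix square root), C = B (I − s sᵀ + V⁻¹) B, and let e be a unit eigenvector of C corresponding to its minimal eigenvalue. Then the unit vector a* = B e / ‖B e‖ minimizes the map a ↦ tr[H (V + F(a,s))⁻¹] over all unit vectors a ∈ ℝ³; that is, for every a ∈ ℝ³ with ‖a‖ = 1, tr[H (V + F(a*,s))⁻¹] ≤ tr[H (V + F(a,s))⁻¹]. -/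
/-!
For a unit vector `a`, the Sherman–Morrison formula gives
`tr[H (V + F(a,s))⁻¹] = tr[H V⁻¹] - aᵀMa / aᵀDa` with `M = V⁻¹HV⁻¹` and `D = I - s sᵀ + V⁻¹`,
so the trace is minimized where this generalized Rayleigh quotient is maximal. Since
`B M B = I` and `B D B = C`, substituting `a = B y` turns the quotient into `yᵀy / yᵀCy`,
which is at most `1/λ` for the least eigenvalue `λ` of `C`, with equality at `y = e`.
-/

open Matrix

/-- Fisher matrix of the projective measurement along Bloch direction `a`
on the qubit state with Bloch vector `s`: `F(a,s) = a aᵀ / (1 - (a·s)²)`. -/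
noncomputable def fisherMat (a s : Fin 3 → ℝ) : Matrix (Fin 3) (Fin 3) ℝ :=
  (1 - (a ⬝ᵥ s) ^ 2)⁻¹ • vecMulVec a a

namespace Matrix

variable {n : Type*} [Fintype n]

section CommSemiring

variable {R : Type*} [CommSemiring R]

theorem vecMulVec_mul_mul_vecMulVec (u v w x : n → R) (A : Matrix n n R) :
    vecMulVec u v * (A * vecMulVec w x) = (v ⬝ᵥ A *ᵥ w) • vecMulVec u x := by
  rw [mul_vecMulVec, vecMulVec_mul_vecMulVec]
  ext i j
  simp only [vecMulVec_apply, smul_apply, Pi.smul_apply, smul_eq_mul, dotProduct_mulVec]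
  ring

theorem dotProduct_mulVec_transpose_mul_mul (B X : Matrix n n R) (y : n → R) :
    y ⬝ᵥ (Bᵀ * X * B) *ᵥ y = (B *ᵥ y) ⬝ᵥ X *ᵥ (B *ᵥ y) := by
  rw [← mulVec_mulVec, ← mulVec_mulVec, dotProduct_mulVec, vecMul_transpose]

theorem smul_dotProduct_mulVec_smul (c : R) (A : Matrix n n R) (x : n → R) :
    (c • x) ⬝ᵥ A *ᵥ (c • x) = c ^ 2 * (x ⬝ᵥ A *ᵥ x) := by
  rw [mulVec_smul, smul_dotProduct, dotProduct_smul, smul_eq_mul, smul_eq_mul, ← mul_assoc, sq]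

theorem smul_dotProduct_mulVec_smul_div {K : Type*} [Field K] {c : K} (hc : c ≠ 0)
    (M D : Matrix n n K) (x : n → K) :
    (c • x) ⬝ᵥ M *ᵥ (c • x) / (c • x) ⬝ᵥ D *ᵥ (c • x) = x ⬝ᵥ M *ᵥ x / x ⬝ᵥ D *ᵥ x := by
  rw [smul_dotProduct_mulVec_smul, smul_dotProduct_mulVec_smul,
    mul_div_mul_left _ _ (pow_ne_zero 2 hc)]

end CommSemiring

theorem sq_dotProduct_le {R : Type*} [CommRing R] [LinearOrder R] [IsStrictOrderedRing R]
    (x y : n → R) : (x ⬝ᵥ y) ^ 2 ≤ (x ⬝ᵥ x) * (y ⬝ᵥ y) := by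
  simpa only [dotProduct, sq] using Finset.sum_mul_sq_le_sq_mul_sq Finset.univ x y

theorem dotProduct_mulVec_div_le_inv {M D : Matrix n n ℝ} (hD : D.PosSemidef) {lam : ℝ}
    (hlam : 0 < lam) (h : ∀ x, lam * (x ⬝ᵥ M *ᵥ x) ≤ x ⬝ᵥ D *ᵥ x) (x : n → ℝ) :
    x ⬝ᵥ M *ᵥ x / x ⬝ᵥ D *ᵥ x ≤ lam⁻¹ := by
  refine div_le_of_le_mul₀ (by simpa using hD.dotProduct_mulVec_nonneg x) (inv_nonneg.2 hlam.le) ?_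
  rw [inv_mul_eq_div, le_div_iff₀ hlam, mul_comm]
  exact h x

variable [DecidableEq n]

section Field

variable {K : Type*} [Field K]

theorem inv_add_vecMulVec {V : Matrix n n K} (hV : IsUnit V.det) (u v : n → K)
    (h : 1 + v ⬝ᵥ V⁻¹ *ᵥ u ≠ 0) :
    (V + vecMulVec u v)⁻¹ =
      V⁻¹ - (1 + v ⬝ᵥ V⁻¹ *ᵥ u)⁻¹ • (V⁻¹ * vecMulVec u v * V⁻¹) := by
  apply inv_eq_right_inv
  set k := (1 + v ⬝ᵥ V⁻¹ *ᵥ u)⁻¹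
  have hk : 1 - k * (1 + v ⬝ᵥ V⁻¹ *ᵥ u) = 0 := by
    rw [inv_mul_cancel₀ h, sub_self]
  have hVV : V * V⁻¹ = 1 := mul_nonsing_inv V hV
  calc (V + vecMulVec u v) * (V⁻¹ - k • (V⁻¹ * vecMulVec u v * V⁻¹))
      = V * V⁻¹ + (1 - k * (1 + v ⬝ᵥ V⁻¹ *ᵥ u)) • (vecMulVec u v * V⁻¹) := by
        rw [add_mul, mul_sub, mul_sub, Matrix.mul_smul, Matrix.mul_smul, ← mul_assoc,
          ← mul_assoc, hVV, one_mul, ← mul_assoc (vecMulVec u v) (V⁻¹ * vecMulVec u v),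
          vecMulVec_mul_mul_vecMulVec, smul_mul, smul_smul]
        module
    _ = 1 := by rw [hk, zero_smul, add_zero, hVV]

theorem trace_mul_inv_add_vecMulVec (H : Matrix n n K) {V : Matrix n n K} (hV : IsUnit V.det)
    (u v : n → K) (h : 1 + v ⬝ᵥ V⁻¹ *ᵥ u ≠ 0) :
    trace (H * (V + vecMulVec u v)⁻¹) =
      trace (H * V⁻¹) - v ⬝ᵥ (V⁻¹ * H * V⁻¹) *ᵥ u / (1 + v ⬝ᵥ V⁻¹ *ᵥ u) := by
  have hcyc : trace (H * (V⁻¹ * vecMulVec u v * V⁻¹)) = v ⬝ᵥ (V⁻¹ * H * V⁻¹) *ᵥ u := by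
    rw [← mul_assoc, ← mul_assoc, trace_mul_comm, ← mul_assoc, ← mul_assoc, mul_vecMulVec,
      trace_vecMulVec, dotProduct_comm]
  rw [inv_add_vecMulVec hV u v h, mul_sub, trace_sub, Matrix.mul_smul, trace_smul, hcyc,
    smul_eq_mul, inv_mul_eq_div]

theorem mul_inv_mul_inv_mul_eq_one_of_mul_self_eq {B V H : Matrix n n K} (hV : IsUnit V.det)
    (hH : IsUnit H.det) (hB : B * B = V * H⁻¹ * V) : B * (V⁻¹ * H * V⁻¹) * B = 1 := by
  have h : V⁻¹ * H * V⁻¹ * B * B = 1 := by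
    rw [mul_assoc _ B, hB]
    simp only [mul_assoc, nonsing_inv_mul_cancel_left _ _ hV, mul_nonsing_inv_cancel_left _ _ hH,
      nonsing_inv_mul _ hV]
  rw [mul_assoc, mul_eq_one_comm.1 h]

end Field

section Real

theorem posSemidef_one_sub_vecMulVec_self {s : n → ℝ} (hs : s ⬝ᵥ s ≤ 1) :
    (1 - vecMulVec s s).PosSemidef := by
  have hsym : (vecMulVec s s).IsHermitian := by
    simpa using (posSemidef_vecMulVec_self_star s).isHermitian
  refine .of_dotProduct_mulVec_nonneg (isHermitian_one.sub hsym) fun x => ?_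
  have hcs := sq_dotProduct_le s x
  have hxx : 0 ≤ x ⬝ᵥ x := by simpa using dotProduct_star_self_nonneg x
  simp only [star_trivial, sub_mulVec, one_mulVec, vecMulVec_mulVec, dotProduct_sub,
    dotProduct_smul, op_smul_eq_smul, smul_eq_mul, dotProduct_comm x s]
  nlinarith

theorem IsHermitian.posSemidef_sub_smul_one {C : Matrix n n ℝ} (hC : C.IsHermitian) {lam : ℝ}
    (hmin : ∀ (μ : ℝ) (v : n → ℝ), v ≠ 0 → C *ᵥ v = μ • v → lam ≤ μ) :
    (C - lam • 1).PosSemidef := by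
  have hA : (C - lam • 1).IsHermitian := hC.sub (isHermitian_one.smul (.all lam))
  refine hA.posSemidef_iff_eigenvalues_nonneg.2 fun j => ?_
  have hv : (hA.eigenvectorBasis j : n → ℝ) ≠ 0 := by
    simpa using hA.eigenvectorBasis.orthonormal.ne_zero j
  have hCv : C *ᵥ hA.eigenvectorBasis j = (hA.eigenvalues j + lam) • hA.eigenvectorBasis j := by
    have := hA.mulVec_eigenvectorBasis j
    rw [sub_mulVec, smul_mulVec, one_mulVec, sub_eq_iff_eq_add] at this
    rw [this, add_smul]
  change 0 ≤ hA.eigenvalues j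
  linarith [hmin _ _ hv hCv]

theorem mul_dotProduct_mulVec_le_of_transpose_mul_mul_eq_one {B M D : Matrix n n ℝ}
    (hBMB : Bᵀ * M * B = 1) {lam : ℝ} (h : (Bᵀ * D * B - lam • 1).PosSemidef) (x : n → ℝ) :
    lam * (x ⬝ᵥ M *ᵥ x) ≤ x ⬝ᵥ D *ᵥ x := by
  obtain ⟨y, rfl⟩ : ∃ y, B *ᵥ y = x :=
    ⟨(Bᵀ * M) *ᵥ x, by rw [mulVec_mulVec, mul_eq_one_comm.1 hBMB, one_mulVec]⟩
  have := h.dotProduct_mulVec_nonneg y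
  rw [star_trivial, sub_mulVec, dotProduct_sub, smul_mulVec, one_mulVec, dotProduct_smul,
    smul_eq_mul, dotProduct_mulVec_transpose_mul_mul, sub_nonneg] at this
  rwa [← dotProduct_mulVec_transpose_mul_mul, hBMB, one_mulVec]

end Real

end Matrix

theorem dotProduct_self_pos {n : Type*} [Fintype n] {x : n → ℝ} (hx : x ≠ 0) : 0 < x ⬝ᵥ x :=
  lt_of_le_of_ne (by simpa using dotProduct_star_self_nonneg x) (Ne.symm (by simpa using hx))

theorem dotProduct_self_inv_sqrt_smul {n : Type*} [Fintype n] {x : n → ℝ} (hx : x ≠ 0) :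
    ((√(x ⬝ᵥ x))⁻¹ • x) ⬝ᵥ ((√(x ⬝ᵥ x))⁻¹ • x) = 1 := by
  have hpos := dotProduct_self_pos hx
  rw [smul_dotProduct, dotProduct_smul, smul_eq_mul, smul_eq_mul, ← mul_assoc, ← mul_inv,
    Real.mul_self_sqrt hpos.le, inv_mul_cancel₀ hpos.ne']

theorem trace_mul_inv_add_fisherMat (H : Matrix (Fin 3) (Fin 3) ℝ) {V : Matrix (Fin 3) (Fin 3) ℝ}
    (hV : V.PosDef) {a s : Fin 3 → ℝ} (hs : s ⬝ᵥ s < 1) (ha : a ⬝ᵥ a = 1) :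
    trace (H * (V + fisherMat a s)⁻¹) =
      trace (H * V⁻¹) - a ⬝ᵥ (V⁻¹ * H * V⁻¹) *ᵥ a / a ⬝ᵥ (1 - vecMulVec s s + V⁻¹) *ᵥ a := by
  have hc : 0 < 1 - (a ⬝ᵥ s) ^ 2 := by nlinarith [sq_dotProduct_le a s]
  have hq : 0 ≤ a ⬝ᵥ V⁻¹ *ᵥ a := by simpa using hV.inv.posSemidef.dotProduct_mulVec_nonneg a
  rw [fisherMat, ← smul_vecMulVec,
    trace_mul_inv_add_vecMulVec H (isUnit_iff_ne_zero.2 hV.det_pos.ne')]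
  · simp only [mulVec_smul, dotProduct_smul, smul_eq_mul, add_mulVec, sub_mulVec, one_mulVec,
      vecMulVec_mulVec, op_smul_eq_smul, dotProduct_add, dotProduct_sub, ha, dotProduct_comm s a]
    congr 1
    field_simp
  · rw [mulVec_smul, dotProduct_smul, smul_eq_mul]
    positivity

theorem aOptimal_minimizer_general
    (s : Fin 3 → ℝ) (hs : Real.sqrt (s ⬝ᵥ s) < 1)
    (V H : Matrix (Fin 3) (Fin 3) ℝ)
    (hV : V.PosDef) (hH : H.PosDef)
    (B : Matrix (Fin 3) (Fin 3) ℝ) (hBpsd : B.PosSemidef)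
    (hBsq : B * B = V * H⁻¹ * V)
    (C : Matrix (Fin 3) (Fin 3) ℝ)
    (hC : C = B * (1 - vecMulVec s s + V⁻¹) * B)
    (e : Fin 3 → ℝ) (he : e ⬝ᵥ e = 1) (lam : ℝ)
    (heig : C *ᵥ e = lam • e)
    (hmin : ∀ (μ : ℝ) (v : Fin 3 → ℝ), v ≠ 0 → C *ᵥ v = μ • v → lam ≤ μ)
    (astar : Fin 3 → ℝ)
    (hastar : astar = (Real.sqrt ((B *ᵥ e) ⬝ᵥ (B *ᵥ e)))⁻¹ • (B *ᵥ e)) :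
    ∀ a : Fin 3 → ℝ, a ⬝ᵥ a = 1 →
      (H * (V + fisherMat astar s)⁻¹).trace ≤ (H * (V + fisherMat a s)⁻¹).trace := by
  intro a ha
  set M := V⁻¹ * H * V⁻¹
  set D := 1 - vecMulVec s s + V⁻¹
  have hss : s ⬝ᵥ s < 1 := by simpa using (Real.sqrt_lt' one_pos).1 hs
  have hD : D.PosDef := PosDef.posSemidef_add (posSemidef_one_sub_vecMulVec_self hss.le) hV.inv
  have hBt : Bᵀ = B := by simpa using hBpsd.isHermitian.eq
  have hBMB : Bᵀ * M * B = 1 := hBt.symm ▸ mul_inv_mul_inv_mul_eq_one_of_mul_self_eq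
    (isUnit_iff_ne_zero.2 hV.det_pos.ne') (isUnit_iff_ne_zero.2 hH.det_pos.ne') hBsq
  have hBDB : Bᵀ * D * B = C := by rw [hBt, hC]
  have hCpsd : (Bᵀ * D * B - lam • 1).PosSemidef := hBDB ▸
    (hBDB ▸ isHermitian_conjTranspose_mul_mul B hD.isHermitian).posSemidef_sub_smul_one hmin
  have hMe : (B *ᵥ e) ⬝ᵥ M *ᵥ (B *ᵥ e) = 1 := by
    rw [← dotProduct_mulVec_transpose_mul_mul, hBMB, one_mulVec, he]
  have hDe : (B *ᵥ e) ⬝ᵥ D *ᵥ (B *ᵥ e) = lam := by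
    rw [← dotProduct_mulVec_transpose_mul_mul, hBDB, heig, dotProduct_smul, he, smul_eq_mul,
      mul_one]
  have hBe : B *ᵥ e ≠ 0 := fun h => by simp [h] at hMe
  have hlam : 0 < lam := hDe ▸ by simpa using hD.dotProduct_mulVec_pos hBe
  have hnorm : 0 < √((B *ᵥ e) ⬝ᵥ (B *ᵥ e)) := Real.sqrt_pos.2 (dotProduct_self_pos hBe)
  have hastar_ratio : astar ⬝ᵥ M *ᵥ astar / astar ⬝ᵥ D *ᵥ astar = lam⁻¹ := by
    rw [hastar, smul_dotProduct_mulVec_smul_div (inv_ne_zero hnorm.ne'), hMe, hDe, one_div]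
  rw [trace_mul_inv_add_fisherMat H hV hss (hastar ▸ dotProduct_self_inv_sqrt_smul hBe),
    trace_mul_inv_add_fisherMat H hV hss ha, hastar_ratio]
  exact sub_le_sub_left (dotProduct_mulVec_div_le_inv hD.posSemidef hlam
    (mul_dotProduct_mulVec_le_of_transpose_mul_mul_eq_one hBMB hCpsd) a) _

/-- A-optimality: the analytic minimizer of `a ↦ tr[H (V + F(a,s))⁻¹]`
over unit vectors `a` is `B e / ‖B e‖`, where `B = √(V H⁻¹ V)`,
`C = B (I - s sᵀ + V⁻¹) B`, and `e` is a unit eigenvector of `C`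
for its minimal eigenvalue. -/
theorem aOptimal_minimizer
    (s : Fin 3 → ℝ) (hs : Real.sqrt (s ⬝ᵥ s) < 1)
    (V H : Matrix (Fin 3) (Fin 3) ℝ)
    (hV : V.PosDef) (hVsymm : V.IsSymm) (hH : H.PosDef) (hHsymm : H.IsSymm)
    (B : Matrix (Fin 3) (Fin 3) ℝ) (hBpsd : B.PosSemidef)
    (hBsq : B * B = V * H⁻¹ * V)
    (C : Matrix (Fin 3) (Fin 3) ℝ)
    (hC : C = B * (1 - vecMulVec s s + V⁻¹) * B)
    (e : Fin 3 → ℝ) (he : e ⬝ᵥ e = 1) (lam : ℝ)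
    (heig : C *ᵥ e = lam • e)
    (hmin : ∀ (μ : ℝ) (v : Fin 3 → ℝ), v ≠ 0 → C *ᵥ v = μ • v → lam ≤ μ)
    (astar : Fin 3 → ℝ)
    (hastar : astar = (Real.sqrt ((B *ᵥ e) ⬝ᵥ (B *ᵥ e)))⁻¹ • (B *ᵥ e)) :
    ∀ a : Fin 3 → ℝ, a ⬝ᵥ a = 1 →
      (H * (V + fisherMat astar s)⁻¹).trace ≤ (H * (V + fisherMat a s)⁻¹).trace :=
  aOptimal_minimizer_general s hs V H hV hH B hBpsd hBsq C hC e he lam heig hmin astar hastar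
end

section
/- For every k×k real symmetric positive semidefinite matrix H, if F is invertible then tr[H E] ≥ tr[H Gᵀ F⁻¹ G] (the weighted-trace generalized Cramér–Rao inequality). -/
/-!
Weighted by `p θ₀`, the block matrix `[[F, G], [Gᵀ, E]]` is the Gram matrix of the vectors
`(s y, t y - θ₀)`, hence positive semidefinite. Its Schur complement `E - Gᵀ F⁻¹ G` is then positive
semidefinite as well, and `tr (H M) ≥ 0` whenever `H` and `M` are.
-/

open Matrix

namespace Matrix

variable {ι m n : Type*} [Fintype ι]

def weightedGram (w : ι → ℝ) (a : ι → m → ℝ) (b : ι → n → ℝ) : Matrix m n ℝ :=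
  ∑ i, w i • vecMulVec (a i) (b i)

variable (w : ι → ℝ)

theorem weightedGram_transpose (a : ι → m → ℝ) (b : ι → n → ℝ) :
    (weightedGram w a b)ᵀ = weightedGram w b a := by
  simp only [weightedGram, transpose_sum, transpose_smul, transpose_vecMulVec]

theorem fromBlocks_weightedGram (a : ι → m → ℝ) (b : ι → n → ℝ) :
    fromBlocks (weightedGram w a a) (weightedGram w a b) (weightedGram w b a)
        (weightedGram w b b) =
      weightedGram w (fun i => Sum.elim (a i) (b i)) (fun i => Sum.elim (a i) (b i)) := by
  ext (j | j) (l | l) <;> simp [weightedGram, Matrix.sum_apply, vecMulVec_apply]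

variable {w}

theorem posSemidef_weightedGram [Finite m] (hw : ∀ i, 0 ≤ w i) (a : ι → m → ℝ) :
    (weightedGram w a a).PosSemidef :=
  posSemidef_sum _ fun i _ => (posSemidef_vecMulVec_self_star (a i)).smul (hw i)

theorem posSemidef_weightedGram_sub_transpose_mul_inv_mul [Fintype m] [Fintype n]
    [DecidableEq m] (hw : ∀ i, 0 ≤ w i) (a : ι → m → ℝ) (b : ι → n → ℝ)
    (ha : IsUnit (weightedGram w a a)) :
    (weightedGram w b b -
      (weightedGram w a b)ᵀ * (weightedGram w a a)⁻¹ * weightedGram w a b).PosSemidef := by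
  have hpd : (weightedGram w a a).PosDef :=
    (posSemidef_weightedGram hw a).posDef_iff_isUnit.mpr ha
  let _ := ha.invertible
  rw [← conjTranspose_eq_transpose_of_trivial, ← hpd.fromBlocks₁₁,
    conjTranspose_eq_transpose_of_trivial, weightedGram_transpose, fromBlocks_weightedGram]
  exact posSemidef_weightedGram hw _

open scoped MatrixOrder ComplexOrder in
theorem PosSemidef.trace_mul_nonneg {𝕜 n : Type*} [RCLike 𝕜] [Fintype n]
    {A B : Matrix n n 𝕜} (hA : A.PosSemidef) (hB : B.PosSemidef) :
    0 ≤ (A * B).trace := by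
  classical
  obtain ⟨C, rfl⟩ := CStarAlgebra.nonneg_iff_eq_star_mul_self.mp hA.nonneg
  rw [star_eq_conjTranspose, Matrix.mul_assoc, trace_mul_comm]
  exact (hB.mul_mul_conjTranspose_same C).trace_nonneg

end Matrix

theorem generalized_cramer_rao_trace_general
    {k : ℕ} {Y : Type*} [Fintype Y]
    (θ₀ : Fin k → ℝ) (p : (Fin k → ℝ) → Y → ℝ) (t : Y → Fin k → ℝ)
    (hpos : ∀ y, 0 < p θ₀ y)
    (s : Y → Fin k → ℝ)
    (E F G : Matrix (Fin k) (Fin k) ℝ)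
    (hE : E = ∑ y, p θ₀ y • vecMulVec (t y - θ₀) (t y - θ₀))
    (hF : F = ∑ y, p θ₀ y • vecMulVec (s y) (s y))
    (hG : G = ∑ y, p θ₀ y • vecMulVec (s y) (t y - θ₀))
    (hFinv : IsUnit F)
    (H : Matrix (Fin k) (Fin k) ℝ) (hH : H.PosSemidef) :
    (H * (Gᵀ * F⁻¹ * G)).trace ≤ (H * E).trace := by
  have hM : (E - Gᵀ * F⁻¹ * G).PosSemidef := by
    subst hE hF hG
    exact posSemidef_weightedGram_sub_transpose_mul_inv_mul (fun y => (hpos y).le) s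
      (fun y => t y - θ₀) hFinv
  have := hH.trace_mul_nonneg hM
  rwa [Matrix.mul_sub, trace_sub, sub_nonneg] at this

/-- Weighted-trace generalized Cramér–Rao inequality:
`tr[H E] ≥ tr[H Gᵀ F⁻¹ G]` for positive semidefinite `H`. -/
theorem generalized_cramer_rao_trace
    {k : ℕ} {Y : Type*} [Fintype Y]
    (θ₀ : Fin k → ℝ) (p : (Fin k → ℝ) → Y → ℝ) (t : Y → Fin k → ℝ)
    (hpos : ∀ y, 0 < p θ₀ y)
    (hsum : ∀ θ, ∑ y, p θ y = 1)
    (hdiff : ∀ y, DifferentiableAt ℝ (fun θ => p θ y) θ₀)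
    (s : Y → Fin k → ℝ)
    (hs : ∀ y i, s y i = (p θ₀ y)⁻¹ * fderiv ℝ (fun θ => p θ y) θ₀ (Pi.single i 1))
    (E F G : Matrix (Fin k) (Fin k) ℝ)
    (hE : E = ∑ y, p θ₀ y • vecMulVec (t y - θ₀) (t y - θ₀))
    (hF : F = ∑ y, p θ₀ y • vecMulVec (s y) (s y))
    (hG : G = ∑ y, p θ₀ y • vecMulVec (s y) (t y - θ₀))
    (hFinv : IsUnit F)
    (H : Matrix (Fin k) (Fin k) ℝ) (hH : H.PosSemidef) :
    (H * (Gᵀ * F⁻¹ * G)).trace ≤ (H * E).trace :=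
  generalized_cramer_rao_trace_general θ₀ p t hpos s E F G hE hF hG hFinv H hH
end

section
/- If the matrix G equals the k×k identity matrix (as happens for an unbiased estimator) and F is invertible, then E − F⁻¹ is positive semidefinite; that is, the standard Cramér–Rao inequality E ≥ F⁻¹ holds. -/
/-!
With the weights `p θ₀`, the matrices `E`, `F`, `G` are the second moments of the error
`a = t - θ₀` and the score `b = s`. The residual `a - Gᵀ F⁻¹ b` of the least-squares
regression of `a` on `b` has second moment `E - Gᵀ F⁻¹ G`, which is therefore positive
semidefinite as a nonnegative combination of outer products `r rᵀ`; for `G = 1` it is `E - F⁻¹`.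
-/

open Matrix

namespace Matrix

variable {ι l m n R : Type*} [Fintype ι]

def crossMoment [Mul R] [AddCommMonoid R] (w : ι → R) (a : ι → m → R) (b : ι → n → R) :
    Matrix m n R :=
  ∑ i, w i • vecMulVec (a i) (b i)

section CommRing

variable [CommRing R] (w : ι → R)

theorem transpose_crossMoment (a : ι → m → R) (b : ι → n → R) :
    (crossMoment w a b)ᵀ = crossMoment w b a := by
  simp only [crossMoment, transpose_sum, transpose_smul, transpose_vecMulVec]

theorem crossMoment_sub_left (a a' : ι → m → R) (b : ι → n → R) :
    crossMoment w (a - a') b = crossMoment w a b - crossMoment w a' b := by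
  simp only [crossMoment, Pi.sub_apply, sub_vecMulVec, smul_sub, Finset.sum_sub_distrib]

theorem crossMoment_sub_right (a : ι → m → R) (b b' : ι → n → R) :
    crossMoment w a (b - b') = crossMoment w a b - crossMoment w a b' := by
  simp only [crossMoment, Pi.sub_apply, vecMulVec_sub, smul_sub, Finset.sum_sub_distrib]

theorem crossMoment_mulVec_left [Fintype m] (M : Matrix l m R) (a : ι → m → R) (b : ι → n → R) :
    crossMoment w (fun i => M *ᵥ a i) b = M * crossMoment w a b := by
  simp only [crossMoment, Matrix.mul_sum, Matrix.mul_smul, mul_vecMulVec]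

theorem crossMoment_mulVec_right [Fintype n] (a : ι → m → R) (M : Matrix l n R)
    (b : ι → n → R) :
    crossMoment w a (fun i => M *ᵥ b i) = crossMoment w a b * Mᵀ := by
  rw [← transpose_transpose (crossMoment w a _), transpose_crossMoment,
    crossMoment_mulVec_left, transpose_mul, transpose_crossMoment]

end CommRing

theorem posSemidef_crossMoment_self [Fintype m] {w : ι → ℝ} (hw : ∀ i, 0 ≤ w i)
    (a : ι → m → ℝ) :
    (crossMoment w a a).PosSemidef :=
  posSemidef_sum _ fun i _ => (posSemidef_vecMulVec_self_star (a i)).smul (hw i)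

theorem posSemidef_crossMoment_schur [Fintype m] [Fintype n] [DecidableEq n]
    {w : ι → ℝ} (hw : ∀ i, 0 ≤ w i) (a : ι → m → ℝ) (b : ι → n → ℝ)
    (hF : IsUnit (crossMoment w b b)) :
    (crossMoment w a a -
      crossMoment w a b * (crossMoment w b b)⁻¹ * crossMoment w b a).PosSemidef := by
  have hF_inv_symm : (crossMoment w b b)⁻¹ᵀ = (crossMoment w b b)⁻¹ := by
    rw [transpose_nonsing_inv, transpose_crossMoment]
  have hresidual := posSemidef_crossMoment_self hw
    (a - fun i => (crossMoment w a b * (crossMoment w b b)⁻¹) *ᵥ b i)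
  rw [crossMoment_sub_left, crossMoment_sub_right, crossMoment_sub_right,
    crossMoment_mulVec_left, crossMoment_mulVec_right, crossMoment_mulVec_left,
    crossMoment_mulVec_right] at hresidual
  convert hresidual using 1
  simp only [transpose_mul, hF_inv_symm, transpose_crossMoment, Matrix.mul_assoc,
    nonsing_inv_mul_cancel_left _ _ ((isUnit_iff_isUnit_det _).mp hF)]
  abel

end Matrix

theorem cramer_rao_unbiased_general
    {k : ℕ} {Y : Type*} [Fintype Y]
    (θ₀ : Fin k → ℝ) (p : (Fin k → ℝ) → Y → ℝ) (t : Y → Fin k → ℝ)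
    (hpos : ∀ y, 0 < p θ₀ y)
    (s : Y → Fin k → ℝ)
    (E F G : Matrix (Fin k) (Fin k) ℝ)
    (hE : E = ∑ y, p θ₀ y • vecMulVec (t y - θ₀) (t y - θ₀))
    (hF : F = ∑ y, p θ₀ y • vecMulVec (s y) (s y))
    (hG : G = ∑ y, p θ₀ y • vecMulVec (s y) (t y - θ₀))
    (hGid : G = 1)
    (hFinv : IsUnit F) :
    (E - F⁻¹).PosSemidef := by
  subst hE hF
  have hG' : crossMoment (p θ₀) s (fun y => t y - θ₀) = 1 := hG.symm.trans hGid
  have hGt : crossMoment (p θ₀) (fun y => t y - θ₀) s = 1 := by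
    rw [← transpose_crossMoment, hG', transpose_one]
  have := posSemidef_crossMoment_schur (fun y => (hpos y).le) (fun y => t y - θ₀) s hFinv
  rwa [hG', hGt, Matrix.one_mul, Matrix.mul_one] at this

/-- Standard Cramér–Rao inequality: if `G = I` (unbiased estimator)
then `E ≥ F⁻¹`. -/
theorem cramer_rao_unbiased
    {k : ℕ} {Y : Type*} [Fintype Y]
    (θ₀ : Fin k → ℝ) (p : (Fin k → ℝ) → Y → ℝ) (t : Y → Fin k → ℝ)
    (hpos : ∀ y, 0 < p θ₀ y)
    (hsum : ∀ θ, ∑ y, p θ y = 1)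
    (hdiff : ∀ y, DifferentiableAt ℝ (fun θ => p θ y) θ₀)
    (s : Y → Fin k → ℝ)
    (hs : ∀ y i, s y i = (p θ₀ y)⁻¹ * fderiv ℝ (fun θ => p θ y) θ₀ (Pi.single i 1))
    (E F G : Matrix (Fin k) (Fin k) ℝ)
    (hE : E = ∑ y, p θ₀ y • vecMulVec (t y - θ₀) (t y - θ₀))
    (hF : F = ∑ y, p θ₀ y • vecMulVec (s y) (s y))
    (hG : G = ∑ y, p θ₀ y • vecMulVec (s y) (t y - θ₀))
    (hGid : G = 1)
    (hFinv : IsUnit F) :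
    (E - F⁻¹).PosSemidef :=
  cramer_rao_unbiased_general θ₀ p t hpos s E F G hE hF hG hGid hFinv
end

section
/- For all vectors u, w ∈ ℝᵏ, the inequality (uᵀ G w)² ≤ (uᵀ F u)(wᵀ E w) holds. -/
open Matrix

/-! With weights `c y = p θ₀ y ≥ 0`, each of the three quadratic forms is a weighted sum over `Y`:
`uᵀ G w = ∑ c (u ⬝ s_y)((t y - θ₀) ⬝ w)`, `uᵀ F u = ∑ c (u ⬝ s_y)²`, `wᵀ E w = ∑ c ((t y - θ₀) ⬝ w)²`,
so the inequality is the Cauchy–Schwarz inequality for the weighted inner product on `Y → ℝ`. -/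

theorem Finset.sq_sum_mul_mul_le_sum_mul_sq_mul_sum_mul_sq {ι R : Type*} [CommSemiring R]
    [LinearOrder R] [IsStrictOrderedRing R] [ExistsAddOfLE R] (s : Finset ι) {c : ι → R}
    (hc : ∀ i ∈ s, 0 ≤ c i) (f g : ι → R) :
    (∑ i ∈ s, c i * f i * g i) ^ 2 ≤ (∑ i ∈ s, c i * f i ^ 2) * ∑ i ∈ s, c i * g i ^ 2 :=
  sum_sq_le_sum_mul_sum_of_sq_le_mul s
    (fun i hi => mul_nonneg (hc i hi) (sq_nonneg _))
    (fun i hi => mul_nonneg (hc i hi) (sq_nonneg _))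
    (fun i _ => le_of_eq (by ring))

theorem Matrix.dotProduct_sum_smul_vecMulVec_mulVec {ι m n α : Type*} [Fintype m] [Fintype n]
    [CommSemiring α] (s : Finset ι) (c : ι → α) (a : ι → m → α) (b : ι → n → α)
    (u : m → α) (w : n → α) :
    u ⬝ᵥ ((∑ i ∈ s, c i • vecMulVec (a i) (b i)) *ᵥ w)
      = ∑ i ∈ s, c i * (u ⬝ᵥ a i) * (b i ⬝ᵥ w) := by
  simp only [sum_mulVec, dotProduct_sum, smul_mulVec, vecMulVec_mulVec, dotProduct_smul,
    op_smul_eq_smul, smul_eq_mul]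
  refine Finset.sum_congr rfl fun i _ => ?_
  ring

theorem cramer_rao_cauchy_schwarz_general
    {k : ℕ} {Y : Type*} [Fintype Y]
    (θ₀ : Fin k → ℝ) (p : (Fin k → ℝ) → Y → ℝ) (t : Y → Fin k → ℝ)
    (hpos : ∀ y, 0 < p θ₀ y)
    (s : Y → Fin k → ℝ)
    (E F G : Matrix (Fin k) (Fin k) ℝ)
    (hE : E = ∑ y, p θ₀ y • vecMulVec (t y - θ₀) (t y - θ₀))
    (hF : F = ∑ y, p θ₀ y • vecMulVec (s y) (s y))
    (hG : G = ∑ y, p θ₀ y • vecMulVec (s y) (t y - θ₀)) :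
    ∀ u w : Fin k → ℝ, (u ⬝ᵥ (G *ᵥ w)) ^ 2 ≤ (u ⬝ᵥ (F *ᵥ u)) * (w ⬝ᵥ (E *ᵥ w)) := by
  intro u w
  subst hE hF hG
  simp only [dotProduct_sum_smul_vecMulVec_mulVec]
  have weighted_cauchy_schwarz := Finset.univ.sq_sum_mul_mul_le_sum_mul_sq_mul_sum_mul_sq
    (fun y _ => (hpos y).le) (fun y => u ⬝ᵥ s y) (fun y => (t y - θ₀) ⬝ᵥ w)
  refine weighted_cauchy_schwarz.trans_eq (congrArg₂ _ (Finset.sum_congr rfl fun y _ => ?_)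
    (Finset.sum_congr rfl fun y _ => ?_))
  · rw [dotProduct_comm (s y) u, mul_assoc, ← sq]
  · rw [dotProduct_comm w, mul_assoc, ← sq]

/-- The Cauchy–Schwarz-type inequality at the heart of the generalized
Cramér–Rao bound: `(uᵀ G w)² ≤ (uᵀ F u)(wᵀ E w)` for all `u, w`. -/
theorem cramer_rao_cauchy_schwarz
    {k : ℕ} {Y : Type*} [Fintype Y]
    (θ₀ : Fin k → ℝ) (p : (Fin k → ℝ) → Y → ℝ) (t : Y → Fin k → ℝ)
    (hpos : ∀ y, 0 < p θ₀ y)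
    (hsum : ∀ θ, ∑ y, p θ y = 1)
    (hdiff : ∀ y, DifferentiableAt ℝ (fun θ => p θ y) θ₀)
    (s : Y → Fin k → ℝ)
    (hs : ∀ y i, s y i = (p θ₀ y)⁻¹ * fderiv ℝ (fun θ => p θ y) θ₀ (Pi.single i 1))
    (E F G : Matrix (Fin k) (Fin k) ℝ)
    (hE : E = ∑ y, p θ₀ y • vecMulVec (t y - θ₀) (t y - θ₀))
    (hF : F = ∑ y, p θ₀ y • vecMulVec (s y) (s y))
    (hG : G = ∑ y, p θ₀ y • vecMulVec (s y) (t y - θ₀)) :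
    ∀ u w : Fin k → ℝ, (u ⬝ᵥ (G *ᵥ w)) ^ 2 ≤ (u ⬝ᵥ (F *ᵥ u)) * (w ⬝ᵥ (E *ᵥ w)) :=
  cramer_rao_cauchy_schwarz_general θ₀ p t hpos s E F G hE hF hG
end

section
/- Fix s ∈ ℝ³ with ‖s‖ < 1 and define Δ^IF(s, s') = (1/2)(1 − s·s' − √(1 − ‖s‖²)·√(1 − ‖s'‖²)) for s' in the open unit ball of ℝ³. Then, as s' → s, Δ^IF(s, s') = (s' − s)ᵀ H^IF(s) (s' − s) + O(‖s' − s‖³), where H^IF(s) = (1/4)(I + s sᵀ / (1 − ‖s‖²)); that is, the difference Δ^IF(s,s') − (s' − s)ᵀ H^IF(s)(s' − s) is big-O of ‖s' − s‖³ as s' → s. -/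
/-!
With `a = 1 - ‖s‖²`, `v = s' - s`, `σ = s·v`, `ν = ‖v‖²` one has `s·s' = 1 - a + σ` and
`1 - ‖s'‖² = a (1 - t)` with `t = (2σ + ν) / a`. Expanding `√(1 - t) = 1 - t/2 - t²/8 + O(t³)`,
the constant and linear terms of the infidelity cancel and its difference with the quadratic form
is exactly `ν (4σ + ν) / (16 a) - (a / 2) O(t³)`. Since `σ = O(‖v‖)` by Cauchy–Schwarz and
`ν = ‖v‖²`, both terms are `O(‖v‖³)`.
-/

open Matrix Asymptotics Filter Topology

noncomputable def sqrtOneSubRemainder (t : ℝ) : ℝ := √(1 - t) - (1 - t / 2 - t ^ 2 / 8)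

lemma sqrtOneSubRemainder_isBigO : sqrtOneSubRemainder =O[𝓝 0] fun t => t ^ 3 := by
  set p : ℝ → ℝ := fun t => 1 - t / 2 - t ^ 2 / 8
  have hcont : ContinuousAt (fun t : ℝ => -(8 + t) / 64 / (√(1 - t) + p t)) 0 :=
    ContinuousAt.div (by fun_prop) (by fun_prop) (by norm_num [p])
  -- `(√(1 - t) - p t) (√(1 - t) + p t) = (1 - t) - p t ^ 2 = -t³ (8 + t) / 64`
  have hfactor : ∀ᶠ t in 𝓝 (0 : ℝ),
      t ^ 3 * (-(8 + t) / 64 / (√(1 - t) + p t)) = sqrtOneSubRemainder t := by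
    filter_upwards [Ioo_mem_nhds (show (-1 : ℝ) < 0 by norm_num) one_pos] with t ⟨ht₁, ht₂⟩
    have hsq : √(1 - t) ^ 2 = 1 - t := Real.sq_sqrt (by linarith)
    have hpos : 0 < √(1 - t) + p t := by
      have := Real.sqrt_nonneg (1 - t)
      simp only [p]
      nlinarith
    rw [sqrtOneSubRemainder, mul_div_assoc', div_eq_iff hpos.ne']
    simp only [p]
    linear_combination (-1 : ℝ) * hsq
  simpa using ((isBigO_refl (fun t : ℝ => t ^ 3) _).mul (hcont.tendsto.isBigO_one ℝ)).congr' hfactor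
    (.of_forall fun _ => rfl)

section DotProduct

variable {ι : Type*} [Fintype ι]

lemma dotProduct_self_nonneg_real (v : ι → ℝ) : 0 ≤ v ⬝ᵥ v :=
  Finset.sum_nonneg fun i _ => mul_self_nonneg (v i)

lemma abs_dotProduct_le_sqrt_mul_sqrt (x y : ι → ℝ) : |x ⬝ᵥ y| ≤ √(x ⬝ᵥ x) * √(y ⬝ᵥ y) := by
  rw [← Real.sqrt_mul (dotProduct_self_nonneg_real x)]
  apply Real.abs_le_sqrt
  simpa [dotProduct, sq] using Finset.sum_mul_sq_le_sq_mul_sq Finset.univ x y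

lemma isBigO_dotProduct_sqrt_dotProduct_self (x : ι → ℝ) (l : Filter (ι → ℝ)) :
    (fun v => x ⬝ᵥ v) =O[l] fun v => √(v ⬝ᵥ v) :=
  .of_bound (√(x ⬝ᵥ x)) <| .of_forall fun v => by
    simpa [abs_of_nonneg (Real.sqrt_nonneg _)] using abs_dotProduct_le_sqrt_mul_sqrt x v

lemma tendsto_sqrt_dotProduct_self_nhds_zero :
    Tendsto (fun v : ι → ℝ => √(v ⬝ᵥ v)) (𝓝 0) (𝓝 0) := by
  simpa using ((continuous_id.dotProduct continuous_id).sqrt.tendsto (0 : ι → ℝ))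

lemma dotProduct_smul_one_add_smul_vecMulVec_mulVec [DecidableEq ι] (c b : ℝ) (x v : ι → ℝ) :
    v ⬝ᵥ ((c • (1 + b • vecMulVec x x)) *ᵥ v) = c * (v ⬝ᵥ v + b * (x ⬝ᵥ v) ^ 2) := by
  simp only [smul_mulVec, add_mulVec, one_mulVec, vecMulVec_mulVec, dotProduct_smul,
    dotProduct_add, dotProduct_comm v x, op_smul_eq_smul, smul_eq_mul]
  ring

lemma infidelity_sub_quadratic_eq [DecidableEq ι] (s v : ι → ℝ) (ha : 0 < 1 - s ⬝ᵥ s) :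
    1 / 2 * (1 - s ⬝ᵥ (s + v) - √(1 - s ⬝ᵥ s) * √(1 - (s + v) ⬝ᵥ (s + v)))
        - v ⬝ᵥ (((1 / 4 : ℝ) • (1 + (1 - s ⬝ᵥ s)⁻¹ • vecMulVec s s)) *ᵥ v)
      = (16 * (1 - s ⬝ᵥ s))⁻¹ * (v ⬝ᵥ v * (4 * s ⬝ᵥ v + v ⬝ᵥ v))
        - (1 - s ⬝ᵥ s) / 2 * sqrtOneSubRemainder ((1 - s ⬝ᵥ s)⁻¹ * (2 * s ⬝ᵥ v + v ⬝ᵥ v)) := by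
  set a := 1 - s ⬝ᵥ s
  have hnorm : 1 - (s + v) ⬝ᵥ (s + v) = a * (1 - a⁻¹ * (2 * s ⬝ᵥ v + v ⬝ᵥ v)) := by
    rw [mul_one_sub, mul_inv_cancel_left₀ ha.ne']
    simp only [a, add_dotProduct, dotProduct_add, dotProduct_comm v s]
    ring
  rw [dotProduct_smul_one_add_smul_vecMulVec_mulVec, hnorm, Real.sqrt_mul ha.le, ← mul_assoc,
    Real.mul_self_sqrt ha.le, dotProduct_add, sqrtOneSubRemainder]
  field_simp
  ring

lemma infidelity_remainder_isBigO (x : ι → ℝ) (a : ℝ) :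
    (fun v : ι → ℝ => (16 * a)⁻¹ * (v ⬝ᵥ v * (4 * x ⬝ᵥ v + v ⬝ᵥ v))
        - a / 2 * sqrtOneSubRemainder (a⁻¹ * (2 * x ⬝ᵥ v + v ⬝ᵥ v)))
      =O[𝓝 0] fun v => √(v ⬝ᵥ v) ^ 3 := by
  set r : (ι → ℝ) → ℝ := fun v => √(v ⬝ᵥ v)
  have hr : Tendsto r (𝓝 0) (𝓝 0) := tendsto_sqrt_dotProduct_self_nhds_zero
  have hsq (v : ι → ℝ) : r v ^ 2 = v ⬝ᵥ v := Real.sq_sqrt (dotProduct_self_nonneg_real v)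
  have hself : (fun v : ι → ℝ => v ⬝ᵥ v) =O[𝓝 0] r :=
    ((isBigO_refl r _).mul (hr.isBigO_one ℝ)).congr (fun v => by rw [← hsq, sq]) fun v => mul_one _
  have hx : (fun v => x ⬝ᵥ v) =O[𝓝 0] r := isBigO_dotProduct_sqrt_dotProduct_self x _
  have hcubic : (fun v : ι → ℝ => v ⬝ᵥ v * (4 * x ⬝ᵥ v + v ⬝ᵥ v)) =O[𝓝 0] (r · ^ 3) :=
    ((isBigO_refl (r · ^ 2) _).mul ((hx.const_mul_left 4).add hself)).congr
      (fun v => by rw [hsq]) fun v => by ring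
  have ht : (fun v => a⁻¹ * (2 * x ⬝ᵥ v + v ⬝ᵥ v)) =O[𝓝 0] r :=
    ((hx.const_mul_left 2).add hself).const_mul_left a⁻¹
  have hrem := (sqrtOneSubRemainder_isBigO.comp_tendsto (ht.trans_tendsto hr)).trans (ht.pow 3)
  exact (hcubic.const_mul_left (16 * a)⁻¹).sub (hrem.const_mul_left (a / 2))

end DotProduct

/-- Second-order Taylor expansion of the infidelity around the true Bloch
vector: `Δ^IF(s,s') − (s'−s)ᵀ H^IF(s) (s'−s) = O(‖s'−s‖³)` as `s' → s`,
where `Δ^IF(s,s') = ½(1 − s·s' − √(1−‖s‖²)√(1−‖s'‖²))` and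
`H^IF(s) = ¼(I + ssᵀ/(1−‖s‖²))`. -/
theorem infidelity_quadratic_approximation
    (s : Fin 3 → ℝ) (hs : Real.sqrt (s ⬝ᵥ s) < 1) :
    (fun s' : Fin 3 → ℝ =>
        (1 / 2) * (1 - s ⬝ᵥ s' - Real.sqrt (1 - s ⬝ᵥ s) * Real.sqrt (1 - s' ⬝ᵥ s'))
          - (s' - s) ⬝ᵥ
              (((1 / 4 : ℝ) • ((1 : Matrix (Fin 3) (Fin 3) ℝ)
                  + (1 - s ⬝ᵥ s)⁻¹ • vecMulVec s s)) *ᵥ (s' - s)))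
      =O[nhds s] (fun s' : Fin 3 → ℝ => Real.sqrt ((s' - s) ⬝ᵥ (s' - s)) ^ 3) := by
  have ha : 0 < 1 - s ⬝ᵥ s := by
    have := (Real.sqrt_lt' one_pos).1 hs
    linarith
  refine ((infidelity_remainder_isBigO s (1 - s ⬝ᵥ s)).comp_tendsto
    (tendsto_sub_nhds_zero_iff.2 tendsto_id)).congr_left fun s' => ?_
  simpa using (infidelity_sub_quadratic_eq s (s' - s) ha).symm
end

section
/- Let X and Y be finite sets, k ∈ ℕ, θ₀ ∈ ℝᵏ. Let p : ℝᵏ → X → ℝ with p(θ₀)(x) > 0 for all x, Σ_x p(θ)(x) = 1 for all θ, and θ ↦ p(θ)(x) differentiable at θ₀; and for each x ∈ X let q_x : ℝᵏ → Y → ℝ with q_x(θ₀)(y) > 0 for all y, Σ_y q_x(θ)(y) = 1 for all θ, and θ ↦ q_x(θ)(y) differentiable at θ₀. Define the joint distribution P(θ)(x,y) = p(θ)(x) q_x(θ)(y) on X × Y. Then the Fisher matrix of P at θ₀ decomposes as Fisher(P) = Fisher(p) + Σ_x p(θ₀)(x) Fisher(q_x), where for a finite family r the Fisher matrix at θ₀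 is Σ_z (∇_θ r(θ)(z)|_{θ₀})(∇_θ r(θ)(z)|_{θ₀})ᵀ / r(θ₀)(z). -/
/-!
By the product rule the gradient of `P(θ)(x,y) = p(θ)(x) q_x(θ)(y)` at `θ₀` is
`p(θ₀)(x) ∇q_x(y) + q_x(θ₀)(y) ∇p(x)`. Expanding its outer product over the fibre of `x`, the
cross terms are `(∑_y ∇q_x(y)) ∇p(x)ᵀ` and its transpose, which vanish because `∑_y q_x(θ)(y) = 1`
for all `θ`; since also `∑_y q_x(θ₀)(y) = 1`, the remaining terms add up to the `x`-term of
`Fisher(p)` plus `p(θ₀)(x) Fisher(q_x)`.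
-/

open Matrix

/-- The Fisher matrix at `θ₀` of a finite family of probability
distributions `r : ℝᵏ → Z → ℝ`:
`Σ_z (∇_θ r(θ)(z)|_{θ₀})(∇_θ r(θ)(z)|_{θ₀})ᵀ / r(θ₀)(z)`. -/
noncomputable def fisherOf {k : ℕ} {Z : Type*} [Fintype Z]
    (r : (Fin k → ℝ) → Z → ℝ) (θ₀ : Fin k → ℝ) : Matrix (Fin k) (Fin k) ℝ :=
  ∑ z, (r θ₀ z)⁻¹ •
    Matrix.vecMulVec (fun i => fderiv ℝ (fun θ => r θ z) θ₀ (Pi.single i 1))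
      (fun i => fderiv ℝ (fun θ => r θ z) θ₀ (Pi.single i 1))

namespace Matrix

section Semiring

variable {ι m n α : Type*} [NonUnitalNonAssocSemiring α]

theorem sum_vecMulVec (s : Finset ι) (w : ι → m → α) (v : n → α) :
    ∑ i ∈ s, vecMulVec (w i) v = vecMulVec (∑ i ∈ s, w i) v := by
  ext a b
  simp only [sum_apply, vecMulVec_apply, Finset.sum_apply, Finset.sum_mul]

theorem vecMulVec_sum (s : Finset ι) (w : m → α) (v : ι → n → α) :
    ∑ i ∈ s, vecMulVec w (v i) = vecMulVec w (∑ i ∈ s, v i) := by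
  ext a b
  simp only [sum_apply, vecMulVec_apply, Finset.sum_apply, Finset.mul_sum]

end Semiring

theorem sum_inv_mul_smul_vecMulVec_smul_add_smul {Y n K : Type*} [Fintype Y] [Field K]
    {a : K} (ha : a ≠ 0) {b : Y → K} (hb : ∀ y, b y ≠ 0) (hbsum : ∑ y, b y = 1)
    (u : n → K) {v : Y → n → K} (hvsum : ∑ y, v y = 0) :
    ∑ y, (a * b y)⁻¹ • vecMulVec (a • v y + b y • u) (a • v y + b y • u)
      = a⁻¹ • vecMulVec u u + a • ∑ y, (b y)⁻¹ • vecMulVec (v y) (v y) := by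
  have hexpand : ∀ y, (a * b y)⁻¹ • vecMulVec (a • v y + b y • u) (a • v y + b y • u)
      = a • (b y)⁻¹ • vecMulVec (v y) (v y) + (vecMulVec (v y) u + vecMulVec u (v y))
        + b y • a⁻¹ • vecMulVec u u := by
    intro y
    ext i j
    simp only [add_apply, smul_apply, vecMulVec_apply, Pi.add_apply, Pi.smul_apply, smul_eq_mul]
    field_simp [hb y]
    ring
  simp only [hexpand, Finset.sum_add_distrib, ← Finset.smul_sum, ← Finset.sum_smul, hbsum,
    sum_vecMulVec, vecMulVec_sum, hvsum, zero_vecMulVec, vecMulVec_zero, add_zero, one_smul]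
  abel

end Matrix

noncomputable def gradVec {k : ℕ} (f : (Fin k → ℝ) → ℝ) (θ₀ : Fin k → ℝ) : Fin k → ℝ :=
  fun i => fderiv ℝ f θ₀ (Pi.single i 1)

section Fisher

variable {k : ℕ} {θ₀ : Fin k → ℝ}

theorem gradVec_mul {f g : (Fin k → ℝ) → ℝ} (hf : DifferentiableAt ℝ f θ₀)
    (hg : DifferentiableAt ℝ g θ₀) :
    gradVec (fun θ => f θ * g θ) θ₀ = f θ₀ • gradVec g θ₀ + g θ₀ • gradVec f θ₀ := by
  ext i
  simp [gradVec, fderiv_fun_mul hf hg]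

theorem sum_gradVec_eq_zero {Y : Type*} [Fintype Y] {q : (Fin k → ℝ) → Y → ℝ} {c : ℝ}
    (hsum : ∀ θ, ∑ y, q θ y = c) (hdiff : ∀ y, DifferentiableAt ℝ (fun θ => q θ y) θ₀) :
    ∑ y, gradVec (fun θ => q θ y) θ₀ = 0 := by
  have hconst : fderiv ℝ (fun θ => ∑ y, q θ y) θ₀ = 0 := by
    simp only [hsum, fderiv_const_apply]
  ext i
  simpa [gradVec, fderiv_fun_sum fun y _ => hdiff y] using
    congrArg (fun L : (Fin k → ℝ) →L[ℝ] ℝ => L (Pi.single i 1)) hconst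

theorem fisherOf_eq_sum_gradVec {Z : Type*} [Fintype Z] (r : (Fin k → ℝ) → Z → ℝ) :
    fisherOf r θ₀ = ∑ z, (r θ₀ z)⁻¹ •
      vecMulVec (gradVec (fun θ => r θ z) θ₀) (gradVec (fun θ => r θ z) θ₀) :=
  rfl

theorem fisherOf_prod {X Y : Type*} [Fintype X] [Fintype Y] (r : (Fin k → ℝ) → X × Y → ℝ) :
    fisherOf r θ₀ = ∑ x, fisherOf (fun θ y => r θ (x, y)) θ₀ :=
  Fintype.sum_prod_type _

theorem fisherOf_mul_left {Y : Type*} [Fintype Y] {f : (Fin k → ℝ) → ℝ}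
    {q : (Fin k → ℝ) → Y → ℝ} (hf : f θ₀ ≠ 0) (hfdiff : DifferentiableAt ℝ f θ₀)
    (hq : ∀ y, q θ₀ y ≠ 0) (hqsum : ∀ θ, ∑ y, q θ y = 1)
    (hqdiff : ∀ y, DifferentiableAt ℝ (fun θ => q θ y) θ₀) :
    fisherOf (fun θ y => f θ * q θ y) θ₀
      = (f θ₀)⁻¹ • vecMulVec (gradVec f θ₀) (gradVec f θ₀) + f θ₀ • fisherOf q θ₀ := by
  simp only [fisherOf_eq_sum_gradVec, gradVec_mul hfdiff (hqdiff _)]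
  exact sum_inv_mul_smul_vecMulVec_smul_add_smul hf hq (hqsum θ₀) _
    (sum_gradVec_eq_zero hqsum hqdiff)

end Fisher

theorem fisher_two_stage_decomposition_general
    {k : ℕ} {X Y : Type*} [Fintype X] [Fintype Y]
    (θ₀ : Fin k → ℝ)
    (p : (Fin k → ℝ) → X → ℝ)
    (hppos : ∀ x, 0 < p θ₀ x)
    (hpdiff : ∀ x, DifferentiableAt ℝ (fun θ => p θ x) θ₀)
    (q : X → (Fin k → ℝ) → Y → ℝ)
    (hqpos : ∀ x y, 0 < q x θ₀ y)
    (hqsum : ∀ x θ, ∑ y, q x θ y = 1)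
    (hqdiff : ∀ x y, DifferentiableAt ℝ (fun θ => q x θ y) θ₀) :
    fisherOf (fun θ (z : X × Y) => p θ z.1 * q z.1 θ z.2) θ₀
      = fisherOf p θ₀ + ∑ x, p θ₀ x • fisherOf (q x) θ₀ := by
  rw [fisherOf_prod, fisherOf_eq_sum_gradVec p, ← Finset.sum_add_distrib]
  exact Finset.sum_congr rfl fun x _ =>
    fisherOf_mul_left (hppos x).ne' (hpdiff x) (fun y => (hqpos x y).ne') (hqsum x) (hqdiff x)

/-- Decomposition of the Fisher matrix of a two-stage (adaptive) experiment:
for the joint distribution `P(θ)(x,y) = p(θ)(x) q_x(θ)(y)`,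
`Fisher(P) = Fisher(p) + Σ_x p(θ₀)(x) Fisher(q_x)`. -/
theorem fisher_two_stage_decomposition
    {k : ℕ} {X Y : Type*} [Fintype X] [Fintype Y]
    (θ₀ : Fin k → ℝ)
    (p : (Fin k → ℝ) → X → ℝ)
    (hppos : ∀ x, 0 < p θ₀ x)
    (hpsum : ∀ θ, ∑ x, p θ x = 1)
    (hpdiff : ∀ x, DifferentiableAt ℝ (fun θ => p θ x) θ₀)
    (q : X → (Fin k → ℝ) → Y → ℝ)
    (hqpos : ∀ x y, 0 < q x θ₀ y)
    (hqsum : ∀ x θ, ∑ y, q x θ y = 1)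
    (hqdiff : ∀ x y, DifferentiableAt ℝ (fun θ => q x θ y) θ₀) :
    fisherOf (fun θ (z : X × Y) => p θ z.1 * q z.1 θ z.2) θ₀
      = fisherOf p θ₀ + ∑ x, p θ₀ x • fisherOf (q x) θ₀ :=
  fisher_two_stage_decomposition_general θ₀ p hppos hpdiff q hqpos hqsum hqdiff
end
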